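/- Let B and C be n×n real symmetric positive definite matrices and let b, c ∈ ℝⁿ with (b − c)ᵀ C (b − c) > 1 (i.e., b lies strictly outside the solid ellipsoid E₂ = {x : (x − c)ᵀ C (x − c) ≤ 1}). Set C̃ = B^{1/2} C^{-1} B^{1/2}, let c̃ be the unique solution of (B^{-1/2} (B^{-1/2} C B^{-1/2})^{1/2}) c̃ = c − b, and let M₁ be the 2n×2n block matrix with blocks [C̃, −I_n; −c̃c̃ᵀ, C̃]. Then the spectrum of M₁ (as a matrix over ℂ) contains an eigenvalue whose real part is strictly negative; in particular the minimum of the real parts of the eigenvalues of M₁ is strictly negative. -/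

import Mathlib

open Matrix

open scoped ComplexOrder in
/-- The positive semidefinite square root of a positive semidefinite matrix
(the definition `Matrix.PosSemidef.sqrt` of the older Mathlib, since removed). -/
noncomputable def Matrix.PosSemidef.sqrt {n 𝕜 : Type*} [Fintype n] [DecidableEq n] [RCLike 𝕜]
    {A : Matrix n n 𝕜} (hA : A.PosSemidef) : Matrix n n 𝕜 :=
  hA.1.eigenvectorUnitary.1 * diagonal ((↑) ∘ (√·) ∘ hA.1.eigenvalues) *
    (star hA.1.eigenvectorUnitary : Matrix n n 𝕜)

/-!
Expanding around the invertible lower-right block, `det M₁ = det (C̃² - c̃c̃ᵀ)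
= (det C̃)² (1 - c̃ᵀ C̃⁻² c̃)` by the matrix determinant lemma. With `S = B^{1/2}` one has
`C̃⁻¹ = S⁻¹ C S⁻¹ = Q²` and `(QS)ᵀ(QS) = C`, so `c̃ᵀ C̃⁻² c̃ = |Q² c̃|² = |QS(c - b)|²
= (b - c)ᵀ C (b - c) > 1`, whence `det M₁ < 0`. A real matrix `M` with negative determinant has a
negative real eigenvalue: `t ↦ det (t + M)` is a monic polynomial which is negative at `0`, so
it vanishes at some `t > 0`.
-/

open Polynomial
open scoped ComplexOrder

namespace Matrix

variable {ι : Type*} [Fintype ι]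

lemma dotProduct_transpose_mul_self_mulVec {R : Type*} [CommRing R] (A : Matrix ι ι R)
    (x : ι → R) : x ⬝ᵥ ((Aᵀ * A) *ᵥ x) = (A *ᵥ x) ⬝ᵥ (A *ᵥ x) := by
  rw [← mulVec_mulVec, dotProduct_mulVec, vecMul_transpose]

variable [DecidableEq ι]

namespace PosSemidef

variable {𝕜 : Type*} [RCLike 𝕜] {A : Matrix ι ι 𝕜}

lemma isHermitian_sqrt (hA : A.PosSemidef) : hA.sqrt.IsHermitian := by
  simp only [IsHermitian, PosSemidef.sqrt, conjTranspose_mul, star_eq_conjTranspose,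
    conjTranspose_conjTranspose, diagonal_conjTranspose, Matrix.mul_assoc]
  congr 3
  funext i
  simp

lemma sqrt_mul_self (hA : A.PosSemidef) : hA.sqrt * hA.sqrt = A := by
  set U : Matrix ι ι 𝕜 := hA.1.eigenvectorUnitary.1
  set D : Matrix ι ι 𝕜 := diagonal ((↑) ∘ (√·) ∘ hA.1.eigenvalues)
  have hU : star U * U = 1 := Unitary.star_mul_self_of_mem hA.1.eigenvectorUnitary.2
  have hD : D * D = diagonal ((↑) ∘ hA.1.eigenvalues) := by
    simp only [D, diagonal_mul_diagonal, Function.comp_apply, ← RCLike.ofReal_mul,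
      Real.mul_self_sqrt (hA.eigenvalues_nonneg _)]
    rfl
  calc hA.sqrt * hA.sqrt = U * (D * (star U * U) * D) * star U := by
        simp only [PosSemidef.sqrt, U, D, Matrix.mul_assoc]
    _ = A := by
      rw [hU, Matrix.mul_one, hD]
      conv_rhs => rw [hA.1.spectral_theorem]
      simp [U, Matrix.mul_assoc]

end PosSemidef

lemma PosDef.isUnit_det_sqrt {𝕜 : Type*} [RCLike 𝕜] {A : Matrix ι ι 𝕜} (hA : A.PosDef) :
    IsUnit hA.posSemidef.sqrt.det := by
  have : IsUnit (hA.posSemidef.sqrt * hA.posSemidef.sqrt) := by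
    rw [PosSemidef.sqrt_mul_self]
    exact hA.isUnit
  exact (isUnit_iff_isUnit_det _).mp (isUnit_of_mul_isUnit_left this)

section Determinant

variable {R : Type*} [CommRing R]

lemma det_fromBlocks_neg_one₁₂ (A C D : Matrix ι ι R) [Invertible D] :
    (fromBlocks A (-1) C D).det = (D * A + C).det := by
  rw [det_fromBlocks₂₂, ← det_mul, Matrix.neg_mul, Matrix.one_mul, Matrix.neg_mul,
    sub_neg_eq_add, Matrix.mul_add, ← Matrix.mul_assoc, mul_invOf_self, Matrix.one_mul]

lemma det_sub_vecMulVec {A : Matrix ι ι R} (hA : IsUnit A.det) (u v : ι → R) :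
    (A - vecMulVec u v).det = A.det * (1 - v ⬝ᵥ (A⁻¹ *ᵥ u)) := by
  rw [sub_eq_add_neg, ← neg_vecMulVec, vecMulVec_eq Unit,
    det_add_replicateCol_mul_replicateRow hA, det_unique (1 + _ : Matrix Unit Unit R),
    Matrix.mul_assoc, ← replicateCol_mulVec, add_apply, one_apply_eq,
    replicateRow_mul_replicateCol_apply, mulVec_neg, dotProduct_neg, sub_eq_add_neg]

end Determinant

lemma det_fromBlocks_neg_one_neg_vecMulVec_lt_zero {A : Matrix ι ι ℝ} (hA : IsUnit A.det)
    {v : ι → ℝ} (hv : 1 < v ⬝ᵥ ((A * A)⁻¹ *ᵥ v)) :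
    (fromBlocks A (-1) (-vecMulVec v v) A).det < 0 := by
  have := A.invertibleOfIsUnitDet hA
  rw [det_fromBlocks_neg_one₁₂, ← sub_eq_add_neg, det_sub_vecMulVec (by simpa using hA.mul hA),
    det_mul]
  exact mul_neg_of_pos_of_neg (mul_self_pos.mpr hA.ne_zero) (by linarith)

lemma dotProduct_inv_mul_self_mulVec {S C Q : Matrix ι ι ℝ} (hS : S.IsHermitian)
    (hSu : IsUnit S.det) (hC : IsUnit C.det) (hQ : Q.IsHermitian)
    (hQsq : Q * Q = S⁻¹ * C * S⁻¹) {v w : ι → ℝ} (hv : (S⁻¹ * Q) *ᵥ v = w) :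
    v ⬝ᵥ (((S * C⁻¹ * S) * (S * C⁻¹ * S))⁻¹ *ᵥ v) = w ⬝ᵥ (C *ᵥ w) := by
  have hSt : Sᵀ = S := (isHermitian_iff_isSymm.mp hS).eq
  have hQt : Qᵀ = Q := (isHermitian_iff_isSymm.mp hQ).eq
  have hinv : (S * C⁻¹ * S)⁻¹ = Q * Q := by
    rw [hQsq, Matrix.mul_inv_rev, Matrix.mul_inv_rev, nonsing_inv_nonsing_inv _ hC,
      Matrix.mul_assoc]
  have hQQv : (Q * Q) *ᵥ v = (Q * S) *ᵥ w := by
    rw [← hv, mulVec_mulVec, Matrix.mul_assoc, ← Matrix.mul_assoc S, mul_nonsing_inv _ hSu,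
      Matrix.one_mul]
  have hQS : (Q * S)ᵀ * (Q * S) = C := by
    rw [transpose_mul, hSt, hQt, Matrix.mul_assoc, ← Matrix.mul_assoc Q, hQsq]
    simp only [← Matrix.mul_assoc, mul_nonsing_inv _ hSu, Matrix.one_mul]
    rw [Matrix.mul_assoc, nonsing_inv_mul _ hSu, Matrix.mul_one]
  calc v ⬝ᵥ (((S * C⁻¹ * S) * (S * C⁻¹ * S))⁻¹ *ᵥ v)
      = v ⬝ᵥ (((Q * Q)ᵀ * (Q * Q)) *ᵥ v) := by
        rw [Matrix.mul_inv_rev, hinv, transpose_mul, hQt]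
    _ = ((Q * S) *ᵥ w) ⬝ᵥ ((Q * S) *ᵥ w) := by
        rw [dotProduct_transpose_mul_self_mulVec, hQQv]
    _ = w ⬝ᵥ (C *ᵥ w) := by rw [← dotProduct_transpose_mul_self_mulVec, hQS]

lemma exists_neg_mem_spectrum_of_det_neg {M : Matrix ι ι ℝ} (hM : M.det < 0) :
    ∃ x < 0, x ∈ spectrum ℝ M := by
  have heval : (-M).charpoly.eval 0 = M.det := by simp [eval_charpoly]
  obtain ⟨s, hroot, hs⟩ : ∃ s, (-M).charpoly.IsRoot s ∧ 0 ≤ s := by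
    by_contra! h
    have := zero_lt_eval_of_roots_lt_of_leadingCoeff_nonneg h
      (by rw [(-M).charpoly_monic.leadingCoeff]; exact zero_le_one)
    linarith
  have hs0 : s ≠ 0 := by
    rintro rfl
    rw [hroot.eq_zero] at heval
    linarith
  refine ⟨-s, by linarith [lt_of_le_of_ne hs hs0.symm], ?_⟩
  rw [← Set.neg_mem_neg, neg_neg, spectrum.neg_eq, mem_spectrum_iff_isRoot_charpoly]
  exact hroot

lemma map_mem_spectrum_map {K L : Type*} [Field K] [Field L] (f : K →+* L) {M : Matrix ι ι K}
    {x : K} (hx : x ∈ spectrum K M) : f x ∈ spectrum L (M.map f) := by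
  rw [mem_spectrum_iff_isRoot_charpoly, charpoly_map] at *
  exact hx.map

end Matrix

/-- Let `B, C` be SPD, `b, c : ℝⁿ` with `(b - c)ᵀ C (b - c) > 1` (so `b` lies strictly outside
the solid ellipsoid `E₂`). With `C̃ = B^{1/2} C⁻¹ B^{1/2}`, `c̃` the unique solution of
`(B^{-1/2} (B^{-1/2} C B^{-1/2})^{1/2}) c̃ = c - b`, and `M₁ = [C̃, -I; -c̃c̃ᵀ, C̃]`, the
spectrum of `M₁` over `ℂ` contains an eigenvalue with strictly negative real part. -/
theorem stmt_8 {n : ℕ} {B C : Matrix (Fin n) (Fin n) ℝ}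
    (hB : B.PosDef) (hC : C.PosDef) {b c : Fin n → ℝ}
    (houtside : (b - c) ⬝ᵥ (C *ᵥ (b - c)) > 1)
    (Q : Matrix (Fin n) (Fin n) ℝ) (hQspd : Q.PosDef)
    (hQsq : Q ^ 2 = (Matrix.PosSemidef.sqrt hB.posSemidef)⁻¹ * C * (Matrix.PosSemidef.sqrt hB.posSemidef)⁻¹)
    (Ct : Matrix (Fin n) (Fin n) ℝ)
    (hCt : Ct = Matrix.PosSemidef.sqrt hB.posSemidef * C⁻¹ * Matrix.PosSemidef.sqrt hB.posSemidef)
    (ct : Fin n → ℝ)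
    (hct : ((Matrix.PosSemidef.sqrt hB.posSemidef)⁻¹ * Q) *ᵥ ct = c - b)
    (M₁ : Matrix (Fin n ⊕ Fin n) (Fin n ⊕ Fin n) ℝ)
    (hM₁ : M₁ = Matrix.fromBlocks Ct (-1) (-(Matrix.vecMulVec ct ct)) Ct) :
    ∃ z ∈ spectrum ℂ (M₁.map Complex.ofReal), z.re < 0 := by
  set S := hB.posSemidef.sqrt
  have hSu : IsUnit S.det := hB.isUnit_det_sqrt
  have hCu : IsUnit C.det := hC.isUnit.map detMonoidHom
  have hCtu : IsUnit Ct.det := by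
    rw [hCt, det_mul, det_mul, det_nonsing_inv]
    exact (hSu.mul hCu.ringInverse).mul hSu
  have hquad : 1 < ct ⬝ᵥ ((Ct * Ct)⁻¹ *ᵥ ct) := by
    rw [hCt, dotProduct_inv_mul_self_mulVec (PosSemidef.isHermitian_sqrt _) hSu hCu
      hQspd.isHermitian (by rwa [← sq]) hct, ← neg_sub, mulVec_neg, dotProduct_neg,
      neg_dotProduct, neg_neg]
    exact houtside
  obtain ⟨x, hx, hmem⟩ := exists_neg_mem_spectrum_of_det_neg
    (hM₁ ▸ det_fromBlocks_neg_one_neg_vecMulVec_lt_zero hCtu hquad)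
  exact ⟨x, map_mem_spectrum_map Complex.ofRealHom hmem, by simpa using hx⟩
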